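/- arXiv:0905.2089 — 4 statements merged into one kernel-verified Lean document; each statement's English description precedes it below -/
import Mathlib

section
/- For real numbers a < b and y < a, the principal value integral ∫_a^b 1/(√((s−a)(b−s)) (s−y)) ds equals π/√((a−y)(b−y)); and for y > b it equals −π/√((y−a)(y−b)). -/
/-!
Substituting `s = (a + b) / 2 + (b - a) / 2 * sin θ` turns `ds / √((s - a) (b - s))` into `dθ`,
leaving `∫_{-π/2}^{π/2} dθ / (c + r sin θ)` with `c = (a + b) / 2 - y`, `r = (b - a) / 2` and
`r² < c²`. The Weierstrass substitution `t = tan (θ / 2)` gives an arctan antiderivative whose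
boundary values are `arctan ((c ± r) / √(c² - r²))`; these two arguments are reciprocal, so the
arctans add up to `π / 2` times the sign of `c`, and `c² - r² = (a - y) (b - y)`.
-/

open MeasureTheory intervalIntegral Real Set

theorem image_sin_Ioo : sin '' Ioo (-(π / 2)) (π / 2) = Ioo (-1) 1 :=
  sinPartialHomeomorph.image_source_eq_target

section

variable {E : Type*} [NormedAddCommGroup E] [NormedSpace ℝ E]

theorem integral_inv_sqrt_smul_eq_integral_comp_sin {a b : ℝ} (hab : a < b) (g : ℝ → E) :
    ∫ s in a..b, (√((s - a) * (b - s)))⁻¹ • g s =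
      ∫ θ in -(π / 2)..π / 2, g ((a + b) / 2 + (b - a) / 2 * sin θ) := by
  set r := (b - a) / 2
  set m := (a + b) / 2
  have hr : 0 < r := by simp only [r]; linarith
  have hpi := pi_pos
  let f : ℝ → ℝ := fun θ ↦ m + r * sin θ
  have hf_image : f '' Ioo (-(π / 2)) (π / 2) = Ioo a b := by
    have : f = (r * · + m) ∘ sin := by ext θ; simp only [f, Function.comp]; ring
    rw [this, image_comp, image_sin_Ioo, image_affine_Ioo hr]
    congr 1 <;> simp only [r, m] <;> ring
  have hf_deriv : ∀ θ ∈ Ioo (-(π / 2)) (π / 2),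
      HasDerivWithinAt f (r * cos θ) (Ioo (-(π / 2)) (π / 2)) θ := fun θ _ ↦
    (((hasDerivAt_sin θ).const_mul r).const_add m).hasDerivWithinAt
  have hf_inj : InjOn f (Ioo (-(π / 2)) (π / 2)) := by
    intro x hx z hz hxz
    exact injOn_sin (Ioo_subset_Icc_self hx) (Ioo_subset_Icc_self hz)
      (mul_left_cancel₀ hr.ne' (add_left_cancel hxz))
  have hsqrt : ∀ θ, √((f θ - a) * (b - f θ)) = |r * cos θ| := by
    intro θ
    rw [← sqrt_sq_eq_abs]
    congr 1
    simp only [f, m, r]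
    linear_combination (-((b - a) / 2) ^ 2) * sin_sq_add_cos_sq θ
  have hcos : ∀ θ ∈ Ioo (-(π / 2)) (π / 2), r * cos θ ≠ 0 := fun θ hθ ↦
    (mul_pos hr (cos_pos_of_mem_Ioo hθ)).ne'
  rw [integral_of_le hab.le, integral_of_le (by linarith), integral_Ioc_eq_integral_Ioo,
    integral_Ioc_eq_integral_Ioo, ← hf_image,
    integral_image_eq_integral_abs_deriv_smul measurableSet_Ioo hf_deriv hf_inj]
  refine setIntegral_congr_fun measurableSet_Ioo fun θ hθ ↦ ?_
  rw [hsqrt θ, smul_inv_smul₀ (abs_ne_zero.mpr (hcos θ hθ))]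

end

theorem add_mul_sin_ne_zero {c r : ℝ} (hrc : r ^ 2 < c ^ 2) (θ : ℝ) : c + r * sin θ ≠ 0 := by
  intro h
  have : c ^ 2 ≤ r ^ 2 := by
    rw [show c = -(r * sin θ) by linarith, neg_sq, mul_pow]
    exact mul_le_of_le_one_right (sq_nonneg r) (sin_sq_le_one θ)
  linarith

theorem hasDerivAt_arctan_tan_half {c r θ : ℝ} (hrc : r ^ 2 < c ^ 2) (hθ : θ ∈ Ioo (-π) π) :
    HasDerivAt (fun θ ↦ 2 / √(c ^ 2 - r ^ 2) * arctan ((c * tan (θ / 2) + r) / √(c ^ 2 - r ^ 2)))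
      (c + r * sin θ)⁻¹ θ := by
  set K := √(c ^ 2 - r ^ 2)
  have hK : K ^ 2 = c ^ 2 - r ^ 2 := sq_sqrt (by linarith)
  have hK0 : K ≠ 0 := (sqrt_pos.mpr (by linarith)).ne'
  have hcos : cos (θ / 2) ≠ 0 :=
    (cos_pos_of_mem_Ioo ⟨by linarith [hθ.1], by linarith [hθ.2]⟩).ne'
  have htan : HasDerivAt (fun θ ↦ tan (θ / 2)) (1 / cos (θ / 2) ^ 2 * (1 / 2)) θ := by
    simpa [Function.comp_def] using (hasDerivAt_tan hcos).comp θ ((hasDerivAt_id θ).div_const 2)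
  refine (((hasDerivAt_arctan _).comp θ
    (((htan.const_mul c).add_const r).div_const K)).const_mul (2 / K)).congr_deriv ?_
  have hsin : sin θ = 2 * sin (θ / 2) * cos (θ / 2) := by
    rw [← sin_two_mul]; ring_nf
  have hden := add_mul_sin_ne_zero hrc θ
  rw [hsin] at hden ⊢
  rw [tan_eq_sin_div_cos, eq_comm, inv_eq_one_div, div_eq_iff hden]
  field_simp
  linear_combination cos (θ / 2) ^ 2 * hK + c ^ 2 * sin_sq_add_cos_sq (θ / 2)

theorem integral_inv_add_mul_sin {c r : ℝ} (hrc : r ^ 2 < c ^ 2) :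
    ∫ θ in -(π / 2)..π / 2, (c + r * sin θ)⁻¹ =
      2 / √(c ^ 2 - r ^ 2) *
        (arctan ((c + r) / √(c ^ 2 - r ^ 2)) + arctan ((c - r) / √(c ^ 2 - r ^ 2))) := by
  have hpi := pi_pos
  have hcont : Continuous fun θ ↦ (c + r * sin θ)⁻¹ :=
    (continuous_const.add (continuous_const.mul continuous_sin)).inv₀ (add_mul_sin_ne_zero hrc)
  rw [integral_eq_sub_of_hasDerivAt (fun θ hθ ↦ hasDerivAt_arctan_tan_half hrc ?_)
    (hcont.intervalIntegrable _ _)]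
  · rw [show π / 2 / 2 = π / 4 by ring, show -(π / 2) / 2 = -(π / 4) by ring, tan_neg,
      tan_pi_div_four, mul_one, show (c * -1 + r) = -(c - r) by ring, neg_div, arctan_neg]
    ring
  · rw [uIcc_of_le (by linarith)] at hθ
    exact ⟨by linarith [hθ.1], by linarith [hθ.2]⟩

theorem integral_inv_add_mul_sin_of_pos {c r : ℝ} (hc : 0 < c) (hrc : r ^ 2 < c ^ 2) :
    ∫ θ in -(π / 2)..π / 2, (c + r * sin θ)⁻¹ = π / √(c ^ 2 - r ^ 2) := by
  have hK : 0 < √(c ^ 2 - r ^ 2) := sqrt_pos.mpr (by linarith)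
  have hcr : 0 < c + r := by nlinarith
  have hpos : 0 < (c + r) / √(c ^ 2 - r ^ 2) := div_pos hcr hK
  have hinv : ((c + r) / √(c ^ 2 - r ^ 2))⁻¹ = (c - r) / √(c ^ 2 - r ^ 2) := by
    rw [inv_div, div_eq_div_iff hcr.ne' hK.ne']
    linear_combination sq_sqrt (by linarith : 0 ≤ c ^ 2 - r ^ 2)
  rw [integral_inv_add_mul_sin hrc, ← hinv, arctan_inv_of_pos hpos]
  field_simp
  ring

theorem integral_inv_add_mul_sin_of_neg {c r : ℝ} (hc : c < 0) (hrc : r ^ 2 < c ^ 2) :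
    ∫ θ in -(π / 2)..π / 2, (c + r * sin θ)⁻¹ = -(π / √(c ^ 2 - r ^ 2)) := by
  have h := integral_inv_add_mul_sin_of_pos (c := -c) (r := -r) (by linarith)
    (by rwa [neg_sq, neg_sq])
  rw [neg_sq, neg_sq] at h
  rw [← h, ← intervalIntegral.integral_neg]
  congr 1 with θ
  rw [← inv_neg]
  ring_nf

theorem pv_integral (a b y : ℝ) (hab : a < b) :
    (y < a → ∫ s in a..b, 1 / (Real.sqrt ((s - a) * (b - s)) * (s - y)) =
      Real.pi / Real.sqrt ((a - y) * (b - y))) ∧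
    (b < y → ∫ s in a..b, 1 / (Real.sqrt ((s - a) * (b - s)) * (s - y)) =
      -(Real.pi / Real.sqrt ((y - a) * (y - b)))) := by
  have hsubst : ∫ s in a..b, 1 / (√((s - a) * (b - s)) * (s - y)) =
      ∫ θ in -(π / 2)..π / 2, ((a + b) / 2 - y + (b - a) / 2 * sin θ)⁻¹ := by
    calc ∫ s in a..b, 1 / (√((s - a) * (b - s)) * (s - y))
        _ = ∫ s in a..b, (√((s - a) * (b - s)))⁻¹ • (s - y)⁻¹ := by
          simp only [one_div, mul_inv, smul_eq_mul]
        _ = ∫ θ in -(π / 2)..π / 2, ((a + b) / 2 + (b - a) / 2 * sin θ - y)⁻¹ :=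
          integral_inv_sqrt_smul_eq_integral_comp_sin hab _
        _ = _ := by ring_nf
  refine ⟨fun hy ↦ ?_, fun hy ↦ ?_⟩
  · rw [hsubst, integral_inv_add_mul_sin_of_pos (by linarith) (by nlinarith)]
    congr 2; ring
  · rw [hsubst, integral_inv_add_mul_sin_of_neg (by linarith) (by nlinarith)]
    congr 3; ring
end

section
/- Let H(λ) = N(∑_{i=1}^N λ_i²/2 − (2/N)∑_{i<j} log|λ_j−λ_i|) on the open Weyl chamber {λ₁ < λ₂ < ⋯ < λ_N} ⊂ ℝ^N. Then at every point of the chamber, Hess H ≥ N·Id as quadratic forms. -/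
theorem hessian_convexity (N : ℕ) (hN : 2 ≤ N) (lam : Fin N → ℝ)
    (hlam : ∀ i j : Fin N, i < j → lam i < lam j) (v : Fin N → ℝ) :
    (N : ℝ) * ∑ i, v i ^ 2 ≤
      ∑ i, ∑ j,
        (if i = j then (N : ℝ) + ∑ k ∈ Finset.univ.erase j, 2 / (lam j - lam k) ^ 2
          else -(2 / (lam i - lam j) ^ 2)) * v i * v j := by
  set w : Fin N → Fin N → ℝ := fun i j => if i = j then 0 else 2 / (lam i - lam j) ^ 2 with hw
  have hwsymm : ∀ i j, w i j = w j i := by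
    intro i j
    simp only [hw]
    rcases eq_or_ne i j with h | h
    · simp [h]
    · rw [if_neg h, if_neg (Ne.symm h), ← neg_sub (lam j) (lam i), neg_pow]
      ring_nf
  have hwnn : ∀ i j, 0 ≤ w i j := by
    intro i j
    simp only [hw]
    rcases eq_or_ne i j with h | h
    · simp [h]
    · rw [if_neg h]; positivity
  have key : ∑ i, ∑ j,
        (if i = j then (N : ℝ) + ∑ k ∈ Finset.univ.erase j, 2 / (lam j - lam k) ^ 2
          else -(2 / (lam i - lam j) ^ 2)) * v i * v j
      = (N : ℝ) * ∑ i, v i ^ 2 + ∑ i, ∑ j, w i j * (v i ^ 2 - v i * v j) := by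
    rw [Finset.mul_sum, ← Finset.sum_add_distrib]
    refine Finset.sum_congr rfl fun i _ => ?_
    rw [← Finset.add_sum_erase _ _ (Finset.mem_univ i),
        ← Finset.add_sum_erase _ (fun j => w i j * (v i ^ 2 - v i * v j)) (Finset.mem_univ i)]
    have hdiag : w i i = 0 := by simp [hw]
    rw [if_pos rfl, hdiag, zero_mul, zero_add]
    have h1 : ∀ j ∈ Finset.univ.erase i,
        (if i = j then (N : ℝ) + ∑ k ∈ Finset.univ.erase j, 2 / (lam j - lam k) ^ 2
          else -(2 / (lam i - lam j) ^ 2)) * v i * v j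
        = -(w i j * (v i * v j)) := by
      intro j hj
      have hne : i ≠ j := fun h => (Finset.mem_erase.mp hj).1 h.symm
      rw [if_neg hne]
      simp only [hw, if_neg hne]
      ring
    rw [Finset.sum_congr rfl h1]
    have h2 : ∀ j ∈ Finset.univ.erase i,
        w i j * (v i ^ 2 - v i * v j) = w i j * v i ^ 2 - w i j * (v i * v j) := by
      intro j _; ring
    rw [Finset.sum_congr rfl h2, Finset.sum_sub_distrib]
    have h3 : ∑ k ∈ Finset.univ.erase i, w i k * v i ^ 2
        = (∑ k ∈ Finset.univ.erase i, 2 / (lam i - lam k) ^ 2) * v i ^ 2 := by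
      rw [Finset.sum_mul]
      refine Finset.sum_congr rfl fun k hk => ?_
      have hne : i ≠ k := fun h => (Finset.mem_erase.mp hk).1 h.symm
      simp only [hw, if_neg hne]
    rw [h3, Finset.sum_neg_distrib]
    ring
  rw [key]
  have hT : 0 ≤ ∑ i, ∑ j, w i j * (v i ^ 2 - v i * v j) := by
    have hc : ∑ i, ∑ j, w i j * (v i ^ 2 - v i * v j)
        = ∑ i, ∑ j, w j i * (v j ^ 2 - v j * v i) :=
      Finset.sum_comm
    have h2 : (∑ i, ∑ j, w i j * (v i ^ 2 - v i * v j)) * 2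
        = ∑ i, ∑ j, w i j * (v i - v j) ^ 2 := by
      calc (∑ i, ∑ j, w i j * (v i ^ 2 - v i * v j)) * 2
          = (∑ i, ∑ j, w i j * (v i ^ 2 - v i * v j))
            + ∑ i, ∑ j, w j i * (v j ^ 2 - v j * v i) := by rw [← hc]; ring
        _ = ∑ i, ∑ j, (w i j * (v i ^ 2 - v i * v j) + w j i * (v j ^ 2 - v j * v i)) := by
            rw [← Finset.sum_add_distrib]
            exact Finset.sum_congr rfl fun i _ => (Finset.sum_add_distrib).symm
        _ = ∑ i, ∑ j, w i j * (v i - v j) ^ 2 := by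
            refine Finset.sum_congr rfl fun i _ => Finset.sum_congr rfl fun j _ => ?_
            rw [hwsymm j i]; ring
    have hnn : 0 ≤ ∑ i, ∑ j, w i j * (v i - v j) ^ 2 :=
      Finset.sum_nonneg fun i _ => Finset.sum_nonneg fun j _ => by positivity
    linarith
  linarith
end

section
/- Let μ be a probability measure and f ≥ 0 a density with ∫ f dμ = 1. Then (∫ |f−1| dμ)² ≤ 2 ∫ f log f dμ (Pinsker-type entropy inequality). -/
open MeasureTheory Real Set

/-!
The pointwise inequality `3 (x - 1)² ≤ 2 (x + 2) (x log x - x + 1)` for `x ≥ 0` is the heart of the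
matter: the difference of the two sides vanishes at `1` and its derivative
`2 ((x + 1) log x - 2 (x - 1))` changes sign there. Combined with AM-GM it gives, for every real `t`,
`t |f - 1| ≤ t² (f + 2) / 6 + (f log f - f + 1)`. Integrating against `μ` with `t = ∫ |f - 1| dμ`
yields `t² ≤ t² / 2 + ∫ f log f dμ`.
-/

lemma monotoneOn_add_one_mul_log_sub :
    MonotoneOn (fun x => (x + 1) * log x - 2 * (x - 1)) (Ioi 0) := by
  refine monotoneOn_of_hasDerivWithinAt_nonneg (f' := fun x => log x + (x + 1) * x⁻¹ - 2)
    (convex_Ioi 0) ?_ (fun x hx => ?_) (fun x hx => ?_)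
  · exact ((continuousOn_id.add continuousOn_const).mul
      (continuousOn_log.mono fun _ hx => (mem_Ioi.mp hx).ne')).sub (by fun_prop)
  · rw [interior_Ioi] at hx
    have := (((hasDerivAt_id x).add_const 1).mul (hasDerivAt_log (ne_of_gt hx))).sub
      (((hasDerivAt_id x).sub_const 1).const_mul 2)
    exact (this.congr_deriv (by simp)).hasDerivWithinAt
  · rw [interior_Ioi] at hx
    have hx : 0 < x := hx
    have h := one_sub_inv_le_log_of_pos hx
    have : (x + 1) * x⁻¹ = 1 + x⁻¹ := by field_simp
    linarith

lemma three_mul_sub_one_sq_le {x : ℝ} (hx : 0 ≤ x) :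
    3 * (x - 1) ^ 2 ≤ 2 * (x + 2) * (x * log x - x + 1) := by
  set g : ℝ → ℝ := fun x => (x + 1) * log x - 2 * (x - 1)
  set ψ : ℝ → ℝ := fun x => (x + 2) * (x * log x - x + 1) - 3 / 2 * (x - 1) ^ 2
  have hψ : Continuous ψ := by fun_prop
  have hψ' : ∀ y, 0 < y → HasDerivAt ψ (2 * g y) y := fun y hy => by
    have := (((hasDerivAt_id' y).add_const 2).mul
      (((hasDerivAt_mul_log hy.ne').sub (hasDerivAt_id' y)).add_const 1)).sub
      ((((hasDerivAt_id' y).sub_const 1).pow 2).const_mul (3 / 2))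
    exact this.congr_deriv (by simp only [g, Pi.sub_apply]; ring)
  have hg : ∀ y, 0 < y → 0 ≤ (y - 1) * g y := fun y hy => by
    have h1 : g 1 = 0 := by simp [g]
    rcases le_total y 1 with h | h
    · have := monotoneOn_add_one_mul_log_sub hy (by norm_num : (0:ℝ) < 1) h
      nlinarith
    · have := monotoneOn_add_one_mul_log_sub (by norm_num : (0:ℝ) < 1) hy h
      nlinarith
  have hψ1 : ψ 1 = 0 := by norm_num [ψ]
  suffices ψ 1 ≤ ψ x by simp only [hψ1, ψ] at this; linarith
  rcases le_total x 1 with h | h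
  · refine antitoneOn_of_hasDerivWithinAt_nonpos (f' := fun y => 2 * g y) (convex_Icc 0 1)
      hψ.continuousOn (fun y hy => ?_) (fun y hy => ?_) ⟨hx, h⟩ ⟨zero_le_one, le_rfl⟩ h
    · rw [interior_Icc] at hy
      exact (hψ' y hy.1).hasDerivWithinAt
    · rw [interior_Icc] at hy
      nlinarith [hg y hy.1, hy.2]
  · refine monotoneOn_of_hasDerivWithinAt_nonneg (f' := fun y => 2 * g y) (convex_Ici 1)
      hψ.continuousOn (fun y hy => ?_) (fun y hy => ?_) self_mem_Ici h h
    · rw [interior_Ici] at hy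
      exact (hψ' y (zero_lt_one.trans hy)).hasDerivWithinAt
    · rw [interior_Ici] at hy
      nlinarith [hg y (zero_lt_one.trans hy), mem_Ioi.mp hy]

lemma mul_abs_sub_one_le {t x : ℝ} (hx : 0 ≤ x) :
    t * |x - 1| ≤ t ^ 2 * (x + 2) / 6 + (x * log x - x + 1) := by
  have hx2 : 0 < x + 2 := by linarith
  have key := three_mul_sub_one_sq_le hx
  rw [← sq_abs] at key
  have : t * |x - 1| * (x + 2) ≤ (t ^ 2 * (x + 2) / 6 + (x * log x - x + 1)) * (x + 2) := by
    nlinarith [sq_nonneg (t * (x + 2) - 3 * |x - 1|)]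
  exact le_of_mul_le_mul_right this hx2

theorem entropy_pinsker {Ω : Type*} [MeasurableSpace Ω] (μ : Measure Ω)
    [IsProbabilityMeasure μ] (f : Ω → ℝ) (hf : ∀ ω, 0 ≤ f ω)
    (hint : Integrable f μ) (hnorm : ∫ ω, f ω ∂μ = 1)
    (hent : Integrable (fun ω => f ω * Real.log (f ω)) μ) :
    (∫ ω, |f ω - 1| ∂μ) ^ 2 ≤ 2 * ∫ ω, f ω * Real.log (f ω) ∂μ := by
  set A := ∫ ω, |f ω - 1| ∂μ
  have hlin : Integrable (fun ω => A ^ 2 * (f ω + 2) / 6) μ :=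
    ((hint.add (integrable_const 2)).const_mul _).div_const _
  have hsub : Integrable (fun ω => f ω * log (f ω) - f ω) μ := hent.sub hint
  have hgap : Integrable (fun ω => f ω * log (f ω) - f ω + 1) μ := hsub.add (integrable_const 1)
  have hmono : ∫ ω, A * |f ω - 1| ∂μ
      ≤ ∫ ω, A ^ 2 * (f ω + 2) / 6 + (f ω * log (f ω) - f ω + 1) ∂μ :=
    integral_mono ((hint.sub (integrable_const 1)).abs.const_mul A) (hlin.add hgap)
      fun ω => mul_abs_sub_one_le (hf ω)
  have hrhs : ∫ ω, A ^ 2 * (f ω + 2) / 6 + (f ω * log (f ω) - f ω + 1) ∂μ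
      = A ^ 2 / 2 + ∫ ω, f ω * log (f ω) ∂μ := by
    rw [integral_add hlin hgap, integral_div, integral_const_mul,
      integral_add hsub (integrable_const 1), integral_sub hent hint,
      integral_add hint (integrable_const 2), hnorm]
    simp only [integral_const, probReal_univ, smul_eq_mul, mul_one]
    ring
  rw [integral_const_mul, hrhs] at hmono
  nlinarith
end

section
/- Let p be the n-th orthonormal polynomial for the weight e^{−nV(x)} on [−1,1], where V is C¹ on (−1,1) and e^{−nV} extends continuously by 0 at x = ±1. Then ∫_{−1}^1 (p'(x))² e^{−nV(x)} dx ≤ 2 ∫_{−1}^1 p(x)² (nV'(x))² e^{−nV(x)} dx. -/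
open MeasureTheory intervalIntegral

/-!
Write `w = e^{-nV}`, so that `w' = -nV' w`. Since `w` vanishes at `±1`, integrating `(p p' w)'`
over `[-1, 1]` gives `∫ p'² w + ∫ p p'' w = ∫ p' (p nV') w`, and `∫ p p'' w = 0` by
orthogonality. The inequality `ab ≤ (a² + b²)/2` under the integral then yields
`∫ p'² w ≤ ∫ p² (nV')² w`.
-/

open Polynomial Set Filter Topology
open scoped Interval

theorem intervalIntegrable_of_continuousOn_Ioo_of_tendsto {E : Type*} [NormedAddCommGroup E]
    {f : ℝ → E} {a b : ℝ} {la lb : E} (hab : a ≤ b) (hf : ContinuousOn f (Ioo a b))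
    (ha : Tendsto f (𝓝[>] a) (𝓝 la)) (hb : Tendsto f (𝓝[<] b) (𝓝 lb)) :
    IntervalIntegrable f volume a b :=
  ((continuousOn_Icc_extendFrom_Ioo hf ha hb).intervalIntegrable_of_Icc hab).congr_uIoo
    (by rw [uIoo_of_le hab]; exact extendFrom_extends hf)

theorem aestronglyMeasurable_of_hasDerivAt {V V' : ℝ → ℝ} {s : Set ℝ} {μ : Measure ℝ}
    (hs : MeasurableSet s) (hV : ∀ x ∈ s, HasDerivAt V (V' x) x) :
    AEStronglyMeasurable V' (μ.restrict s) :=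
  (measurable_deriv V).aestronglyMeasurable.congr
    ((ae_restrict_iff' hs).2 (ae_of_all _ fun x hx => (hV x hx).deriv))

section WeightedSquares

variable {f g w : ℝ → ℝ} {a b : ℝ} {μ : Measure ℝ}

theorem intervalIntegrable_mul_mul_of_sq (hw : ∀ x, 0 ≤ w x)
    (hf : IntervalIntegrable (fun x => f x ^ 2 * w x) μ a b)
    (hg : IntervalIntegrable (fun x => g x ^ 2 * w x) μ a b)
    (hm : AEStronglyMeasurable (fun x => f x * g x * w x) (μ.restrict (Ι a b))) :
    IntervalIntegrable (fun x => f x * g x * w x) μ a b := by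
  refine (hf.add hg).mono_fun' hm (ae_of_all _ fun x => ?_)
  have hfg : |f x * g x| ≤ f x ^ 2 + g x ^ 2 := by
    rw [abs_mul]
    nlinarith [two_mul_le_add_sq |f x| |g x|, sq_abs (f x), sq_abs (g x), abs_nonneg (f x),
      abs_nonneg (g x)]
  calc ‖f x * g x * w x‖ = |f x * g x| * w x := by
        rw [Real.norm_eq_abs, abs_mul, abs_of_nonneg (hw x)]
    _ ≤ (f x ^ 2 + g x ^ 2) * w x := mul_le_mul_of_nonneg_right hfg (hw x)
    _ = f x ^ 2 * w x + g x ^ 2 * w x := add_mul _ _ _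

theorem integral_mul_mul_le_half_add (hab : a ≤ b) (hw : ∀ x, 0 ≤ w x)
    (hf : IntervalIntegrable (fun x => f x ^ 2 * w x) μ a b)
    (hg : IntervalIntegrable (fun x => g x ^ 2 * w x) μ a b)
    (hfg : IntervalIntegrable (fun x => f x * g x * w x) μ a b) :
    ∫ x in a..b, f x * g x * w x ∂μ ≤
      ((∫ x in a..b, f x ^ 2 * w x ∂μ) + ∫ x in a..b, g x ^ 2 * w x ∂μ) / 2 :=
  calc ∫ x in a..b, f x * g x * w x ∂μ
      ≤ ∫ x in a..b, (f x ^ 2 * w x + g x ^ 2 * w x) / 2 ∂μ :=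
        integral_mono_on hab hfg ((hf.add hg).div_const 2) fun x _ => by
          nlinarith [mul_nonneg (sq_nonneg (f x - g x)) (hw x)]
    _ = _ := by rw [intervalIntegral.integral_div, integral_add hf hg]

end WeightedSquares

theorem Polynomial.natDegree_derivative_derivative_lt {R : Type*} [Semiring R] {p : R[X]}
    (hp : p.natDegree ≠ 0) :
    (derivative (derivative p)).natDegree < p.natDegree :=
  ((natDegree_derivative_le _).trans (Nat.sub_le _ _)).trans_lt (natDegree_derivative_lt hp)

theorem integral_derivative_sq_mul_eq_of_orthogonal {p : ℝ[X]} {w Q' : ℝ → ℝ} {a b : ℝ}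
    (hab : a < b) (hw : ∀ x ∈ Ioo a b, HasDerivAt w (-Q' x * w x) x)
    (ha : Tendsto w (𝓝[>] a) (𝓝 0)) (hb : Tendsto w (𝓝[<] b) (𝓝 0))
    (hwint : IntervalIntegrable w volume a b)
    (hcross : IntervalIntegrable
      (fun x => (derivative p).eval x * (p.eval x * Q' x) * w x) volume a b)
    (horth : ∫ x in a..b, p.eval x * (derivative (derivative p)).eval x * w x = 0) :
    ∫ x in a..b, (derivative p).eval x ^ 2 * w x =
      ∫ x in a..b, (derivative p).eval x * (p.eval x * Q' x) * w x := by
  set p' := derivative p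
  set p'' := derivative p'
  have hsq : IntervalIntegrable (fun x => p'.eval x ^ 2 * w x) volume a b :=
    hwint.continuousOn_mul (p'.continuous.pow 2).continuousOn
  have hpp'' : IntervalIntegrable (fun x => p.eval x * p''.eval x * w x) volume a b :=
    hwint.continuousOn_mul (p.continuous.mul p''.continuous).continuousOn
  have hderiv : ∀ x ∈ Ioo a b, HasDerivAt (fun x => p.eval x * p'.eval x * w x)
      (p'.eval x ^ 2 * w x + p.eval x * p''.eval x * w x - p'.eval x * (p.eval x * Q' x) * w x)
      x := fun x hx =>
    (((p.hasDerivAt x).mul (p'.hasDerivAt x)).mul (hw x hx)).congr_deriv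
      (by simp only [Pi.mul_apply, p', p'']; ring)
  have hboundary : ∀ c : ℝ, ∀ l ≤ 𝓝 c, Tendsto w l (𝓝 0) →
      Tendsto (fun x => p.eval x * p'.eval x * w x) l (𝓝 0) := fun c l hl hwl => by
    simpa using (((p.continuous.mul p'.continuous).tendsto c).mono_left hl).mul hwl
  have hftc := integral_eq_sub_of_hasDerivAt_of_tendsto hab hderiv ((hsq.add hpp'').sub hcross)
    (hboundary a _ nhdsWithin_le_nhds ha) (hboundary b _ nhdsWithin_le_nhds hb)
  rw [sub_self, integral_sub (hsq.add hpp'') hcross, integral_add hsq hpp'', horth] at hftc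
  linarith

theorem orthopoly_derivative_bound_general (n : ℕ) (hn : 0 < n) (V V' : ℝ → ℝ)
    (hV : ∀ x ∈ Set.Ioo (-1 : ℝ) 1, HasDerivAt V (V' x) x)
    (hlim1 : Filter.Tendsto (fun x => Real.exp (-(n : ℝ) * V x))
      (nhdsWithin 1 (Set.Iio 1)) (nhds 0))
    (hlim2 : Filter.Tendsto (fun x => Real.exp (-(n : ℝ) * V x))
      (nhdsWithin (-1) (Set.Ioi (-1))) (nhds 0))
    (p : Polynomial ℝ) (hdeg : p.natDegree = n)
    (horth : ∀ q : Polynomial ℝ, q.natDegree < n →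
      ∫ x in (-1 : ℝ)..1, p.eval x * q.eval x * Real.exp (-(n : ℝ) * V x) = 0)
    (hint2 : IntervalIntegrable
      (fun x => p.eval x ^ 2 * ((n : ℝ) * V' x) ^ 2 * Real.exp (-(n : ℝ) * V x))
      volume (-1) 1) :
    ∫ x in (-1 : ℝ)..1, (Polynomial.derivative p).eval x ^ 2 * Real.exp (-(n : ℝ) * V x) ≤
      2 * ∫ x in (-1 : ℝ)..1,
        p.eval x ^ 2 * ((n : ℝ) * V' x) ^ 2 * Real.exp (-(n : ℝ) * V x) := by
  set w : ℝ → ℝ := fun x => Real.exp (-(n : ℝ) * V x)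
  have hw : ∀ x ∈ Ioo (-1 : ℝ) 1, HasDerivAt w (-((n : ℝ) * V' x) * w x) x := fun x hx =>
    ((hV x hx).const_mul _).exp.congr_deriv (by ring)
  have hwcont : ContinuousOn w (Ioo (-1) 1) := fun x hx =>
    (hw x hx).continuousAt.continuousWithinAt
  have hwint : IntervalIntegrable w volume (-1) 1 :=
    intervalIntegrable_of_continuousOn_Ioo_of_tendsto (by norm_num) hwcont hlim2 hlim1
  have hint1 : IntervalIntegrable (fun x => (derivative p).eval x ^ 2 * w x) volume (-1) 1 :=
    hwint.continuousOn_mul ((derivative p).continuous.pow 2).continuousOn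
  have hint2' : IntervalIntegrable (fun x => (p.eval x * (n * V' x)) ^ 2 * w x) volume (-1) 1 := by
    simpa only [mul_pow] using hint2
  have hmeas : AEStronglyMeasurable (fun x => (derivative p).eval x * (p.eval x * (n * V' x)) * w x)
      (volume.restrict (Ι (-1) 1)) := by
    rw [uIoc_of_le (by norm_num), ← restrict_Ioo_eq_restrict_Ioc]
    exact ((derivative p).continuous.aestronglyMeasurable.mul (p.continuous.aestronglyMeasurable.mul
      ((aestronglyMeasurable_of_hasDerivAt measurableSet_Ioo hV).const_mul _))).mul
      (hwcont.aestronglyMeasurable measurableSet_Ioo)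
  have hcross := intervalIntegrable_mul_mul_of_sq (fun x => (Real.exp_pos _).le) hint1 hint2' hmeas
  have hIJ := integral_mul_mul_le_half_add (by norm_num) (fun x => (Real.exp_pos _).le)
    hint1 hint2' hcross
  rw [← integral_derivative_sq_mul_eq_of_orthogonal (by norm_num) hw hlim2 hlim1 hwint hcross
    (horth _ (hdeg ▸ natDegree_derivative_derivative_lt (by omega)))] at hIJ
  have hJ : 0 ≤ ∫ x in (-1 : ℝ)..1, p.eval x ^ 2 * ((n : ℝ) * V' x) ^ 2 * w x :=
    integral_nonneg (by norm_num) fun x _ => by positivity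
  simp only [w, mul_pow] at hIJ hJ ⊢
  linarith

theorem orthopoly_derivative_bound (n : ℕ) (hn : 0 < n) (V V' : ℝ → ℝ)
    (hV : ∀ x ∈ Set.Ioo (-1 : ℝ) 1, HasDerivAt V (V' x) x)
    (hV'cont : ContinuousOn V' (Set.Ioo (-1 : ℝ) 1))
    (hlim1 : Filter.Tendsto (fun x => Real.exp (-(n : ℝ) * V x))
      (nhdsWithin 1 (Set.Iio 1)) (nhds 0))
    (hlim2 : Filter.Tendsto (fun x => Real.exp (-(n : ℝ) * V x))
      (nhdsWithin (-1) (Set.Ioi (-1))) (nhds 0))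
    (p : Polynomial ℝ) (hdeg : p.natDegree = n)
    (horth : ∀ q : Polynomial ℝ, q.natDegree < n →
      ∫ x in (-1 : ℝ)..1, p.eval x * q.eval x * Real.exp (-(n : ℝ) * V x) = 0)
    (hint1 : IntervalIntegrable
      (fun x => (Polynomial.derivative p).eval x ^ 2 * Real.exp (-(n : ℝ) * V x))
      volume (-1) 1)
    (hint2 : IntervalIntegrable
      (fun x => p.eval x ^ 2 * ((n : ℝ) * V' x) ^ 2 * Real.exp (-(n : ℝ) * V x))
      volume (-1) 1) :
    ∫ x in (-1 : ℝ)..1, (Polynomial.derivative p).eval x ^ 2 * Real.exp (-(n : ℝ) * V x) ≤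
      2 * ∫ x in (-1 : ℝ)..1,
        p.eval x ^ 2 * ((n : ℝ) * V' x) ^ 2 * Real.exp (-(n : ℝ) * V x) :=
  orthopoly_derivative_bound_general n hn V V' hV hlim1 hlim2 p hdeg horth hint2
end
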